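/- Under the hypotheses of the degenerate variable metric proximal point lemma (M_k → M, ∑‖M_{k+1}−M_k‖ < ∞, M_k⁻¹T M_k-monotone, (M_k+T)⁻¹ L-Lipschitz, zer T ≠ ∅), if additionally every weak cluster point of the iterates u^{k+1} = (M_k+T)⁻¹M_k u^k is a fixed point of (M+T)⁻¹M, then (u^k) converges weakly to some u ∈ zer T. -/

import Mathlib

open scoped InnerProductSpace
open Filter Topology

/-!
Fix a zero `z` of `T`. Monotonicity of `M_k⁻¹T` in the `M_k`-seminorm makes one step
nonexpansive towards `z` in that seminorm, and the Lipschitz continuity of the resolvent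
controls the full norm `‖u^{k+1} - z‖` by `‖M_k (u^k - z)‖`. Since the metrics vary by a summable
amount, `‖u^k - z‖²_{M_k}` is quasi-Fejér monotone, hence converges, and `(u^k)` is bounded.
Weak compactness gives a weak cluster point; being a fixed point of `(M + T)⁻¹M`, it is a zero
of `T`. For two weak
cluster points `v, w` the limits of `‖u^k - v‖²_M` and `‖u^k - w‖²_M` force `‖v - w‖_M = 0`
(Opial's argument in the seminorm of `M`), and the Lipschitz bound `‖v - w‖ ≤ L ‖M_k (v - w)‖`
upgrades this to `v = w`.
-/

/-- Weak convergence of x to l. -/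
def WeakConv {H : Type} [NormedAddCommGroup H] [InnerProductSpace ℝ H]
    (x : ℕ → H) (l : H) : Prop :=
  ∀ w : H, Filter.Tendsto (fun n => ⟪x n, w⟫_ℝ) Filter.atTop (nhds ⟪l, w⟫_ℝ)

/-- A weak (sequential) cluster point of x. -/
def WeakClusterPt {H : Type} [NormedAddCommGroup H] [InnerProductSpace ℝ H]
    (x : ℕ → H) (v : H) : Prop :=
  ∃ φ : ℕ → ℕ, StrictMono φ ∧ WeakConv (x ∘ φ) v

theorem exists_tendsto_of_le_mul_one_add {b ε : ℕ → ℝ} (hb : ∀ k, 0 ≤ b k)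
    (hsum : Summable ε) (hrec : ∀ k, b (k + 1) ≤ b k * (1 + ε k)) :
    ∃ r, Tendsto b atTop (𝓝 r) := by
  set S : ℕ → ℝ := fun k => ∑' j, ε (j + k)
  have hS : ∀ k, S k = ε k + S (k + 1) := fun k => by
    simpa [S, add_assoc, add_comm 1] using ((summable_nat_add_iff k).mpr hsum).tsum_eq_zero_add
  -- `1 + ε ≤ exp ε` makes `b k * exp (∑_{j ≥ k} ε j)` antitone.
  set d : ℕ → ℝ := fun k => b k * Real.exp (S k)
  have hanti : Antitone d := antitone_nat_of_succ_le fun k => calc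
    d (k + 1) ≤ b k * (1 + ε k) * Real.exp (S (k + 1)) :=
      mul_le_mul_of_nonneg_right (hrec k) (Real.exp_pos _).le
    _ ≤ b k * Real.exp (ε k) * Real.exp (S (k + 1)) := by
      gcongr
      · exact hb k
      · linarith [Real.add_one_le_exp (ε k)]
    _ = d k := by rw [mul_assoc, ← Real.exp_add, ← hS]
  have hd : Tendsto d atTop (𝓝 (⨅ k, d k)) :=
    tendsto_atTop_ciInf hanti ⟨0, by rintro _ ⟨k, rfl⟩; exact mul_nonneg (hb k) (Real.exp_pos _).le⟩
  refine ⟨(⨅ k, d k) * Real.exp (-0),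
    (hd.mul ((Real.continuous_exp.tendsto _).comp (tendsto_sum_nat_add ε).neg)).congr fun k => ?_⟩
  change b k * Real.exp (S k) * Real.exp (-S k) = b k
  rw [mul_assoc, ← Real.exp_add, add_neg_cancel, Real.exp_zero, mul_one]

namespace ContinuousLinearMap.IsPositive

variable {H : Type*} [NormedAddCommGroup H] [InnerProductSpace ℝ H] {A : H →L[ℝ] H}

theorem inner_sq_le (hA : A.IsPositive) (v w : H) :
    ⟪A v, w⟫_ℝ ^ 2 ≤ ⟪A v, v⟫_ℝ * ⟪A w, w⟫_ℝ := by
  have hquad : ∀ t : ℝ, 0 ≤ ⟪A v, v⟫_ℝ * (t * t) + 2 * ⟪A v, w⟫_ℝ * t + ⟪A w, w⟫_ℝ := by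
    intro t
    have h := hA.inner_nonneg_left (t • v + w)
    have hsymm : ⟪A w, v⟫_ℝ = ⟪A v, w⟫_ℝ := by
      rw [hA.inner_left_eq_inner_right, real_inner_comm]
    simp only [map_add, map_smul, inner_add_left, inner_add_right, real_inner_smul_left,
      real_inner_smul_right, hsymm] at h
    linarith
  have := discrim_le_zero hquad
  rw [discrim] at this
  linarith

theorem norm_apply_sq_le (hA : A.IsPositive) (v : H) : ‖A v‖ ^ 2 ≤ ‖A‖ * ⟪A v, v⟫_ℝ := by
  have hAv : ‖A v‖ ^ 2 = ⟪A v, A v⟫_ℝ := (real_inner_self_eq_norm_sq _).symm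
  have hAAv : ⟪A (A v), A v⟫_ℝ ≤ ‖A‖ * ‖A v‖ ^ 2 :=
    calc ⟪A (A v), A v⟫_ℝ ≤ ‖A (A v)‖ * ‖A v‖ := real_inner_le_norm _ _
      _ ≤ ‖A‖ * ‖A v‖ * ‖A v‖ := by gcongr; exact A.le_opNorm _
      _ = ‖A‖ * ‖A v‖ ^ 2 := by ring
  have hcs : (‖A v‖ ^ 2) ^ 2 ≤ ‖A v‖ ^ 2 * (‖A‖ * ⟪A v, v⟫_ℝ) := by
    have := hA.inner_sq_le v (A v)
    rw [← hAv] at this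
    nlinarith [hA.inner_nonneg_left v]
  rcases (sq_nonneg ‖A v‖).eq_or_lt with h | h
  · rw [← h]
    exact mul_nonneg (norm_nonneg A) (hA.inner_nonneg_left v)
  · nlinarith

theorem apply_eq_zero_of_inner_self_eq_zero (hA : A.IsPositive) {v : H} (hv : ⟪A v, v⟫_ℝ = 0) :
    A v = 0 := by
  have := hA.norm_apply_sq_le v
  rw [hv, mul_zero] at this
  exact norm_eq_zero.mp (pow_eq_zero_iff two_ne_zero |>.mp (le_antisymm this (sq_nonneg _)))

end ContinuousLinearMap.IsPositive

theorem tendsto_inner_apply_sub_inner_apply {H : Type*} [NormedAddCommGroup H]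
    [InnerProductSpace ℝ H] {A : ℕ → H →L[ℝ] H} {A₀ : H →L[ℝ] H} (hA : Tendsto A atTop (𝓝 A₀))
    {v : ℕ → H} {R : ℝ} (hv : ∀ k, ‖v k‖ ≤ R) :
    Tendsto (fun k => ⟪A k (v k), v k⟫_ℝ - ⟪A₀ (v k), v k⟫_ℝ) atTop (𝓝 0) := by
  refine squeeze_zero_norm (a := fun k => ‖A k - A₀‖ * R ^ 2) (fun k => ?_) ?_
  · rw [← inner_sub_left, ← sub_apply]
    calc ‖⟪(A k - A₀) (v k), v k⟫_ℝ‖ ≤ ‖(A k - A₀) (v k)‖ * ‖v k‖ := norm_inner_le_norm _ _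
      _ ≤ ‖A k - A₀‖ * ‖v k‖ * ‖v k‖ := by gcongr; exact (A k - A₀).le_opNorm _
      _ = ‖A k - A₀‖ * ‖v k‖ ^ 2 := by ring
      _ ≤ ‖A k - A₀‖ * R ^ 2 := by gcongr; exact hv k
  · simpa using (tendsto_iff_norm_sub_tendsto_zero.mp hA).mul_const (R ^ 2)

section ResolventStep

variable {H : Type*} [NormedAddCommGroup H] [InnerProductSpace ℝ H]

/-- `A⁻¹T` is monotone for the semi-inner product `⟪A ·, ·⟫`. -/
def MonotoneInMetric (T : H → Set H) (A : H →L[ℝ] H) : Prop :=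
  ∀ u₁ v₁ u₂ v₂ : H, A v₁ ∈ T u₁ → A v₂ ∈ T u₂ → 0 ≤ ⟪A (u₁ - u₂), v₁ - v₂⟫_ℝ

/-- `(A + T)⁻¹` is `L`-Lipschitz. -/
def ResolventLipschitzWith (T : H → Set H) (A : H →L[ℝ] H) (L : ℝ) : Prop :=
  ∀ x₁ x₂ y₁ y₂ : H, x₁ - A y₁ ∈ T y₁ → x₂ - A y₂ ∈ T y₂ → ‖y₁ - y₂‖ ≤ L * ‖x₁ - x₂‖

variable {T : H → Set H} {A : H →L[ℝ] H} {L : ℝ} {x y z : H}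

theorem inner_step_sub_le (hA : A.IsPositive) (hmono : MonotoneInMetric T A)
    (hxy : A x - A y ∈ T y) (hz : 0 ∈ T z) :
    ⟪A (y - z), y - z⟫_ℝ ≤ ⟪A (x - z), x - z⟫_ℝ := by
  have h := hmono y (x - y) z 0 (by rwa [map_sub]) (by rwa [map_zero])
  rw [sub_zero, show x - y = (x - z) - (y - z) by abel, inner_sub_right] at h
  have := hA.inner_sq_le (y - z) (x - z)
  nlinarith [hA.inner_nonneg_left (y - z), hA.inner_nonneg_left (x - z)]

theorem norm_step_sub_le (hLip : ResolventLipschitzWith T A L)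
    (hxy : A x - A y ∈ T y) (hz : 0 ∈ T z) : ‖y - z‖ ≤ L * ‖A (x - z)‖ := by
  rw [map_sub]
  exact hLip _ _ y z hxy (by rwa [sub_self])

theorem norm_step_sub_sq_le (hA : A.IsPositive) (hLip : ResolventLipschitzWith T A L)
    (hxy : A x - A y ∈ T y) (hz : 0 ∈ T z) :
    ‖y - z‖ ^ 2 ≤ L ^ 2 * ‖A‖ * ⟪A (x - z), x - z⟫_ℝ :=
  calc ‖y - z‖ ^ 2 ≤ (L * ‖A (x - z)‖) ^ 2 :=
        pow_le_pow_left₀ (norm_nonneg _) (norm_step_sub_le hLip hxy hz) 2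
    _ = L ^ 2 * ‖A (x - z)‖ ^ 2 := by ring
    _ ≤ L ^ 2 * ‖A‖ * ⟪A (x - z), x - z⟫_ℝ := by
        rw [mul_assoc]; gcongr; exact hA.norm_apply_sq_le _

theorem inner_step_sub_le_mul (hA : A.IsPositive) (hmono : MonotoneInMetric T A)
    (hLip : ResolventLipschitzWith T A L)
    (hxy : A x - A y ∈ T y) (hz : 0 ∈ T z) (B : H →L[ℝ] H) :
    ⟪B (y - z), y - z⟫_ℝ ≤ ⟪A (x - z), x - z⟫_ℝ * (1 + L ^ 2 * ‖A‖ * ‖B - A‖) := by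
  have hdiff : ⟪(B - A) (y - z), y - z⟫_ℝ ≤ ‖B - A‖ * ‖y - z‖ ^ 2 :=
    calc ⟪(B - A) (y - z), y - z⟫_ℝ ≤ ‖(B - A) (y - z)‖ * ‖y - z‖ := real_inner_le_norm _ _
      _ ≤ ‖B - A‖ * ‖y - z‖ * ‖y - z‖ := by gcongr; exact (B - A).le_opNorm _
      _ = ‖B - A‖ * ‖y - z‖ ^ 2 := by ring
  have hsplit : ⟪B (y - z), y - z⟫_ℝ = ⟪A (y - z), y - z⟫_ℝ + ⟪(B - A) (y - z), y - z⟫_ℝ := by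
    rw [sub_apply, inner_sub_left]; ring
  have := inner_step_sub_le hA hmono hxy hz
  have := mul_le_mul_of_nonneg_left (norm_step_sub_sq_le hA hLip hxy hz) (norm_nonneg (B - A))
  linarith

end ResolventStep

section Iteration

variable {H : Type*} [NormedAddCommGroup H] [InnerProductSpace ℝ H] {T : H → Set H}
  {M : ℕ → H →L[ℝ] H} {L C : ℝ} {u : ℕ → H} {z : H}

theorem exists_tendsto_inner_iterate_sub (hpos : ∀ k, (M k).IsPositive)
    (hmono : ∀ k, MonotoneInMetric T (M k))
    (hLip : ∀ k, ResolventLipschitzWith T (M k) L)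
    (hstep : ∀ k, M k (u k) - M k (u (k + 1)) ∈ T (u (k + 1)))
    (hC : ∀ k, ‖M k‖ ≤ C) (hsum : Summable fun k => ‖M (k + 1) - M k‖) (hz : 0 ∈ T z) :
    ∃ r, Tendsto (fun k => ⟪M k (u k - z), u k - z⟫_ℝ) atTop (𝓝 r) := by
  refine exists_tendsto_of_le_mul_one_add (fun k => (hpos k).inner_nonneg_left _)
    (hsum.mul_left (L ^ 2 * C)) fun k => ?_
  calc _ ≤ ⟪M k (u k - z), u k - z⟫_ℝ * (1 + L ^ 2 * ‖M k‖ * ‖M (k + 1) - M k‖) :=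
        inner_step_sub_le_mul (hpos k) (hmono k) (hLip k) (hstep k) hz (M (k + 1))
    _ ≤ ⟪M k (u k - z), u k - z⟫_ℝ * (1 + L ^ 2 * C * ‖M (k + 1) - M k‖) := by
        gcongr
        · exact (hpos k).inner_nonneg_left _
        · exact hC k

theorem exists_norm_iterate_le (hpos : ∀ k, (M k).IsPositive)
    (hmono : ∀ k, MonotoneInMetric T (M k))
    (hLip : ∀ k, ResolventLipschitzWith T (M k) L)
    (hstep : ∀ k, M k (u k) - M k (u (k + 1)) ∈ T (u (k + 1)))
    (hC : ∀ k, ‖M k‖ ≤ C) (hsum : Summable fun k => ‖M (k + 1) - M k‖) (hz : 0 ∈ T z) :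
    ∃ R, ∀ k, ‖u k‖ ≤ R := by
  obtain ⟨r, hr⟩ := exists_tendsto_inner_iterate_sub hpos hmono hLip hstep hC hsum hz
  obtain ⟨B, hB⟩ := hr.bddAbove_range
  refine ⟨max ‖u 0‖ (‖z‖ + √(L ^ 2 * C * B)), fun k => ?_⟩
  rcases k with _ | k
  · exact le_max_left _ _
  have hsq : ‖u (k + 1) - z‖ ^ 2 ≤ L ^ 2 * C * B :=
    calc ‖u (k + 1) - z‖ ^ 2 ≤ L ^ 2 * ‖M k‖ * ⟪M k (u k - z), u k - z⟫_ℝ :=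
          norm_step_sub_sq_le (hpos k) (hLip k) (hstep k) hz
      _ ≤ L ^ 2 * C * B :=
          mul_le_mul (mul_le_mul_of_nonneg_left (hC k) (sq_nonneg L)) (hB ⟨k, rfl⟩)
            ((hpos k).inner_nonneg_left _) (mul_nonneg (sq_nonneg L) ((norm_nonneg _).trans (hC 0)))
  calc ‖u (k + 1)‖ ≤ ‖z‖ + ‖u (k + 1) - z‖ := norm_le_norm_add_norm_sub' _ _
    _ ≤ ‖z‖ + √(L ^ 2 * C * B) := by gcongr; exact Real.le_sqrt_of_sq_le hsq
    _ ≤ _ := le_max_right _ _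

theorem eq_of_tendsto_apply_sub_eq_zero {M₀ : H →L[ℝ] H} {v w : H}
    (hLip : ∀ k, ResolventLipschitzWith T (M k) L)
    (hM : Tendsto M atTop (𝓝 M₀)) (hv : 0 ∈ T v) (hw : 0 ∈ T w) (h : M₀ (v - w) = 0) :
    v = w := by
  have hle : ∀ k, ‖v - w‖ ≤ L * ‖M k (v - w)‖ :=
    fun k => norm_step_sub_le (hLip k) (by rwa [sub_self]) hw
  have hlim : Tendsto (fun k => L * ‖M k (v - w)‖) atTop (𝓝 (L * ‖M₀ (v - w)‖)) :=
    ((((ContinuousLinearMap.apply ℝ H (v - w)).continuous.tendsto M₀).comp hM).norm).const_mul L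
  rw [h, norm_zero, mul_zero] at hlim
  exact sub_eq_zero.mp (norm_le_zero_iff.mp (ge_of_tendsto' hlim hle))

end Iteration

section WeakClusterPoints

variable {H : Type} [NormedAddCommGroup H] [InnerProductSpace ℝ H]

theorem inner_apply_sub_eq_zero_of_weakClusterPt {A : H →L[ℝ] H}
    (hA : (A : H →ₗ[ℝ] H).IsSymmetric) {u : ℕ → H} {v w : H}
    (hv : WeakClusterPt u v) (hw : WeakClusterPt u w) {rv rw : ℝ}
    (hrv : Tendsto (fun k => ⟪A (u k - v), u k - v⟫_ℝ) atTop (𝓝 rv))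
    (hrw : Tendsto (fun k => ⟪A (u k - w), u k - w⟫_ℝ) atTop (𝓝 rw)) :
    ⟪A (v - w), v - w⟫_ℝ = 0 := by
  set c := ⟪A v, v⟫_ℝ - ⟪A w, w⟫_ℝ
  have hsymm : ∀ x y : H, ⟪A x, y⟫_ℝ = ⟪x, A y⟫_ℝ := hA
  -- The difference of the two squared seminorms is affine in `u k`.
  have hid : ∀ k, ⟪A (u k - v), u k - v⟫_ℝ - ⟪A (u k - w), u k - w⟫_ℝ =
      -2 * ⟪u k, A (v - w)⟫_ℝ + c := fun k => by
    have hcomm : ∀ p, ⟪A p, u k⟫_ℝ = ⟪u k, A p⟫_ℝ := fun p => real_inner_comm _ _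
    simp only [c, map_sub, inner_sub_left, inner_sub_right, hcomm, hsymm (u k)]
    ring
  have hlim : ∀ p, WeakClusterPt u p → rv - rw = -2 * ⟪p, A (v - w)⟫_ℝ + c := by
    rintro p ⟨φ, hφ, hp⟩
    exact tendsto_nhds_unique
      (((hrv.comp hφ.tendsto_atTop).sub (hrw.comp hφ.tendsto_atTop)).congr fun n => hid (φ n))
      (((hp _).const_mul (-2)).add_const c)
  have := (hlim v hv).symm.trans (hlim w hw)
  rw [real_inner_comm, inner_sub_left]
  linarith

variable [CompleteSpace H]

theorem exists_weakClusterPt_of_bounded {x : ℕ → H} {C : ℝ} (hx : ∀ n, ‖x n‖ ≤ C) :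
    ∃ l, WeakClusterPt x l := by
  set K := (Submodule.span ℝ (Set.range x)).topologicalClosure
  have hxK : ∀ n, x n ∈ K :=
    fun n => Submodule.le_topologicalClosure _ (Submodule.subset_span ⟨n, rfl⟩)
  have : CompleteSpace K := (Submodule.isClosed_topologicalClosure _).completeSpace_coe
  have : TopologicalSpace.SeparableSpace K :=
    ((Set.countable_range x).isSeparable.span.closure).separableSpace
  -- Sequential Banach–Alaoglu in the separable space `K`, then Riesz representation in `K`.
  let f : ℕ → WeakDual ℝ K := fun n => StrongDual.toWeakDual (innerSL ℝ (⟨x n, hxK n⟩ : K))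
  have hf : ∀ n, f n ∈ WeakDual.toStrongDual ⁻¹' Metric.closedBall 0 C := fun n =>
    mem_closedBall_zero_iff.mpr ((innerSL_apply_norm ℝ (⟨x n, hxK n⟩ : K)).trans_le (hx n))
  obtain ⟨g, -, φ, hφ, hg⟩ := WeakDual.isSeqCompact_closedBall ℝ K 0 C hf
  refine ⟨(InnerProductSpace.toDual ℝ K).symm (WeakDual.toStrongDual g), φ, hφ, fun w => ?_⟩
  have := ((WeakDual.eval_continuous (K.orthogonalProjectionOnto w)).tendsto g).comp hg
  convert this using 2 with n
  · simp [f]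
  · rw [← Submodule.inner_orthogonalProjectionOnto_eq_of_mem_left,
      InnerProductSpace.toDual_symm_apply]
    rfl

theorem weakConv_of_forall_weakClusterPt_eq {x : ℕ → H} {C : ℝ} {l : H} (hx : ∀ n, ‖x n‖ ≤ C)
    (h : ∀ v, WeakClusterPt x v → v = l) : WeakConv x l := by
  intro w
  refine tendsto_of_subseq_tendsto fun ns hns => ?_
  obtain ⟨ms, -, hms⟩ := strictMono_subseq_of_tendsto_atTop hns
  obtain ⟨v, ψ, hψ, hv⟩ := exists_weakClusterPt_of_bounded fun n => hx (ns (ms n))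
  obtain rfl := h v ⟨(ns ∘ ms) ∘ ψ, hms.comp hψ, hv⟩
  exact ⟨ms ∘ ψ, hv w⟩

end WeakClusterPoints

theorem stmt6_general {H : Type} [NormedAddCommGroup H] [InnerProductSpace ℝ H] [CompleteSpace H]
    (T : H → Set H) (hzer : ∃ z : H, (0 : H) ∈ T z)
    (M : ℕ → H →L[ℝ] H) (Mlim : H →L[ℝ] H)
    (hsa : ∀ k, IsSelfAdjoint (M k)) (hpsd : ∀ k, ∀ x : H, 0 ≤ ⟪M k x, x⟫_ℝ)
    (hsalim : IsSelfAdjoint Mlim) (hpsdlim : ∀ x : H, 0 ≤ ⟪Mlim x, x⟫_ℝ)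
    (hconv : Filter.Tendsto M Filter.atTop (nhds Mlim))
    (hsum : Summable (fun k => ‖M (k + 1) - M k‖))
    (hmono : ∀ k, ∀ u₁ v₁ u₂ v₂ : H, M k v₁ ∈ T u₁ → M k v₂ ∈ T u₂ →
      0 ≤ ⟪M k (u₁ - u₂), v₁ - v₂⟫_ℝ)
    (L : ℝ)
    (hLip : ∀ k, ∀ x₁ x₂ y₁ y₂ : H, x₁ - M k y₁ ∈ T y₁ → x₂ - M k y₂ ∈ T y₂ →
      ‖y₁ - y₂‖ ≤ L * ‖x₁ - x₂‖)
    (J : ℕ → H → H)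
    (hJ : ∀ k x, M k x - M k (J k x) ∈ T (J k x))
    (Jlim : H → H)
    (hJlim : ∀ x, Mlim x - Mlim (Jlim x) ∈ T (Jlim x))
    (u : ℕ → H) (hu : ∀ k, u (k + 1) = J k (u k))
    -- every weak cluster point of (u^k) is a fixed point of J^M:
    (hcluster : ∀ v : H, WeakClusterPt u v → Jlim v = v) :
    ∃ l : H, (0 : H) ∈ T l ∧ WeakConv u l := by
  obtain ⟨z, hz⟩ := hzer
  have hpos : ∀ k, (M k).IsPositive := fun k =>
    (ContinuousLinearMap.isPositive_iff' _).2 ⟨hsa k, hpsd k⟩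
  have hposlim : Mlim.IsPositive := (ContinuousLinearMap.isPositive_iff' _).2 ⟨hsalim, hpsdlim⟩
  have hstep : ∀ k, M k (u k) - M k (u (k + 1)) ∈ T (u (k + 1)) := fun k => hu k ▸ hJ k (u k)
  obtain ⟨C, hC⟩ := hconv.norm.bddAbove_range
  have hC : ∀ k, ‖M k‖ ≤ C := fun k => hC ⟨k, rfl⟩
  obtain ⟨R, hR⟩ := exists_norm_iterate_le hpos hmono hLip hstep hC hsum hz
  have hzero : ∀ v, WeakClusterPt u v → 0 ∈ T v := fun v hv => by
    simpa [hcluster v hv] using hJlim v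
  have hlim : ∀ v, 0 ∈ T v → ∃ r, Tendsto (fun k => ⟪Mlim (u k - v), u k - v⟫_ℝ) atTop (𝓝 r) := by
    intro v hv
    obtain ⟨r, hr⟩ := exists_tendsto_inner_iterate_sub hpos hmono hLip hstep hC hsum hv
    have hbound : ∀ k, ‖u k - v‖ ≤ R + ‖v‖ :=
      fun k => (norm_sub_le _ _).trans (by gcongr; exact hR k)
    exact ⟨r, by simpa using hr.sub (tendsto_inner_apply_sub_inner_apply hconv hbound)⟩
  have huniq : ∀ v w, WeakClusterPt u v → WeakClusterPt u w → v = w := by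
    intro v w hv hw
    obtain ⟨rv, hrv⟩ := hlim v (hzero v hv)
    obtain ⟨rw, hrw⟩ := hlim w (hzero w hw)
    exact eq_of_tendsto_apply_sub_eq_zero hLip hconv (hzero v hv) (hzero w hw)
      (hposlim.apply_eq_zero_of_inner_self_eq_zero
        (inner_apply_sub_eq_zero_of_weakClusterPt hposlim.isSymmetric hv hw hrv hrw))
  obtain ⟨l, hl⟩ := exists_weakClusterPt_of_bounded hR
  exact ⟨l, hzero l hl, weakConv_of_forall_weakClusterPt_eq hR fun v hv => huniq v l hv hl⟩

/-- Degenerate variable metric proximal point: if every weak cluster point of the iterates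
is a fixed point of (M+T)⁻¹M, then the iterates converge weakly to a zero of T. -/
theorem stmt6 {H : Type} [NormedAddCommGroup H] [InnerProductSpace ℝ H] [CompleteSpace H]
    (T : H → Set H) (hzer : ∃ z : H, (0 : H) ∈ T z)
    (M : ℕ → H →L[ℝ] H) (Mlim : H →L[ℝ] H)
    (hsa : ∀ k, IsSelfAdjoint (M k)) (hpsd : ∀ k, ∀ x : H, 0 ≤ ⟪M k x, x⟫_ℝ)
    (hsalim : IsSelfAdjoint Mlim) (hpsdlim : ∀ x : H, 0 ≤ ⟪Mlim x, x⟫_ℝ)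
    (hconv : Filter.Tendsto M Filter.atTop (nhds Mlim))
    (hsum : Summable (fun k => ‖M (k + 1) - M k‖))
    (hmono : ∀ k, ∀ u₁ v₁ u₂ v₂ : H, M k v₁ ∈ T u₁ → M k v₂ ∈ T u₂ →
      0 ≤ ⟪M k (u₁ - u₂), v₁ - v₂⟫_ℝ)
    (L : ℝ)
    (hLip : ∀ k, ∀ x₁ x₂ y₁ y₂ : H, x₁ - M k y₁ ∈ T y₁ → x₂ - M k y₂ ∈ T y₂ →
      ‖y₁ - y₂‖ ≤ L * ‖x₁ - x₂‖)
    (J : ℕ → H → H)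
    (hJ : ∀ k x, M k x - M k (J k x) ∈ T (J k x))
    (hJuniq : ∀ k x v, M k x - M k v ∈ T v → v = J k x)
    (Jlim : H → H)
    (hJlim : ∀ x, Mlim x - Mlim (Jlim x) ∈ T (Jlim x))
    (hJlimuniq : ∀ x v, Mlim x - Mlim v ∈ T v → v = Jlim x)
    (u : ℕ → H) (hu : ∀ k, u (k + 1) = J k (u k))
    -- every weak cluster point of (u^k) is a fixed point of J^M:
    (hcluster : ∀ v : H, WeakClusterPt u v → Jlim v = v) :
    ∃ l : H, (0 : H) ∈ T l ∧ WeakConv u l :=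
  stmt6_general T hzer M Mlim hsa hpsd hsalim hpsdlim hconv hsum hmono L hLip J hJ Jlim hJlim u hu
    hcluster
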